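/- arXiv:1202.1882 — 7 statements merged into one kernel-verified Lean document; each statement's English description precedes it below -/
import Mathlib

section
/- Let G = (X, W) be a monotone simple game on a finite set X with |X| = n. For each bijection σ : {1,…,n} → X, let Q_σ(G) be the least k ∈ {1,…,n} such that {σ(1),…,σ(k)} is a winning coalition, and Q_σ(G) = n+1 if no such k exists. Let Q̄(G) be the average of Q_σ(G) over all n! bijections σ. Then Q̄(G) = n + 1 − Σ_{k=0}^{n} |W_k| / C(n,k), where W_k is the set of winning coalitions of size k. -/
/-- The set of the first `k` players queried, according to the ordering `σ`. -/
def initSeg {n : ℕ} {X : Type*} [DecidableEq X] (σ : Fin n ≃ X) (k : ℕ) : Finset X :=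
  (Finset.univ.filter fun j : Fin n => (j : ℕ) < k).image σ

open Classical in
/-- The number of queries needed to find a winning coalition under the ordering `σ`:
the least `k` such that the first `k` players queried form a winning coalition, and
`n + 1` if no such `k` exists. -/
noncomputable def Qval {n : ℕ} {X : Type*} [DecidableEq X] (W : Finset (Finset X))
    (σ : Fin n ≃ X) : ℕ :=
  if h : ∃ k, initSeg σ k ∈ W then Nat.find h else n + 1

/-!
Under monotonicity the losing prefixes of an ordering `σ` are exactly those of length
`k < Q_σ`, so `Q_σ` counts the lengths `k ∈ {0, …, n}` whose prefix is losing. Summing over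
`σ` and exchanging the sums, it remains to count the orderings whose prefix of length `k` is
winning.
Since the permutations of `X` act transitively on the `k`-subsets, every `k`-subset is the
prefix of exactly `n! / C(n,k)` orderings.
-/

open Finset

section
variable {n : ℕ} {X : Type*} [DecidableEq X]

lemma initSeg_mono (σ : Fin n ≃ X) {k l : ℕ} (h : k ≤ l) : initSeg σ k ⊆ initSeg σ l :=
  image_subset_image <| monotone_filter_right _ fun _ _ hj => hj.trans_le h

lemma initSeg_subset_initSeg_self (σ : Fin n ≃ X) (k : ℕ) : initSeg σ k ⊆ initSeg σ n :=
  image_subset_image <| monotone_filter_right _ fun j _ _ => j.isLt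

lemma card_initSeg (σ : Fin n ≃ X) (k : ℕ) : #(initSeg σ k) = min n k := by
  rw [initSeg, card_image_of_injective _ σ.injective, Fin.card_filter_val_lt]

lemma initSeg_trans (σ : Fin n ≃ X) (π : Equiv.Perm X) (k : ℕ) :
    initSeg (σ.trans π) k = (initSeg σ k).image π := by
  rw [initSeg, initSeg, image_image]
  rfl

lemma exists_perm_image_eq {S T : Finset X} (h : #S = #T) :
    ∃ π : Equiv.Perm X, S.image π = T := by
  have := Set.powersetCard.isPretransitive (α := X) (n := #S)
  obtain ⟨π, hπ⟩ := MulAction.exists_smul_eq (Equiv.Perm X)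
    (⟨S, rfl⟩ : Set.powersetCard X #S) ⟨T, h.symm⟩
  exact ⟨π, congrArg Subtype.val hπ⟩

open Classical in
lemma filter_initSeg_notMem_eq_range (W : Finset (Finset X))
    (hmono : ∀ A B : Finset X, A ∈ W → A ⊆ B → B ∈ W) (σ : Fin n ≃ X) :
    {k ∈ range (n + 1) | initSeg σ k ∉ W} = range (Qval W σ) := by
  unfold Qval
  split_ifs with h
  · have hwin := Nat.find_spec h
    have hle : Nat.find h ≤ n := by
      by_contra! hlt
      exact Nat.find_min h hlt (hmono _ _ hwin (initSeg_subset_initSeg_self σ _))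
    ext k
    simp only [mem_filter, mem_range]
    constructor
    · rintro ⟨-, hk⟩
      by_contra! hge
      exact hk (hmono _ _ hwin (initSeg_mono σ hge))
    · intro hk
      exact ⟨by omega, Nat.find_min h hk⟩
  · push Not at h
    exact filter_true_of_mem fun k _ => h k

lemma sum_Qval_eq_sum_card_losing [Fintype X] (W : Finset (Finset X))
    (hmono : ∀ A B : Finset X, A ∈ W → A ⊆ B → B ∈ W) :
    ∑ σ : Fin n ≃ X, Qval W σ
      = ∑ k ∈ range (n + 1), #{σ : Fin n ≃ X | initSeg σ k ∉ W} := by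
  calc ∑ σ : Fin n ≃ X, Qval W σ
      = ∑ σ : Fin n ≃ X, #{k ∈ range (n + 1) | initSeg σ k ∉ W} := by
        simp only [filter_initSeg_notMem_eq_range W hmono, card_range]
    _ = ∑ k ∈ range (n + 1), #{σ : Fin n ≃ X | initSeg σ k ∉ W} := by
        simp only [card_filter]
        exact sum_comm

end

section
variable {n : ℕ} {X : Type*} [Fintype X] [DecidableEq X]

lemma card_initSeg_fiber_congr (k : ℕ) {S T : Finset X} (h : #S = #T) :
    #{σ : Fin n ≃ X | initSeg σ k = S} = #{σ : Fin n ≃ X | initSeg σ k = T} := by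
  obtain ⟨π, rfl⟩ := exists_perm_image_eq h
  refine card_equiv ((Equiv.refl _).equivCongr π) fun σ => ?_
  simp [initSeg_trans, image_inj π.injective]

lemma card_equiv_fin (hn : Fintype.card X = n) : Fintype.card (Fin n ≃ X) = n.factorial := by
  rw [Fintype.card_equiv (Fintype.equivFinOfCardEq hn).symm, Fintype.card_fin]

lemma card_initSeg_fiber_mul_choose (hn : Fintype.card X = n) {k : ℕ} (hk : k ≤ n)
    {S : Finset X} (hS : #S = k) :
    #{σ : Fin n ≃ X | initSeg σ k = S} * n.choose k = n.factorial := by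
  have hsum := sum_card_fiberwise_eq_card_filter univ (powersetCard k (univ : Finset X))
    fun σ : Fin n ≃ X => initSeg σ k
  have hall : ∀ σ ∈ (univ : Finset (Fin n ≃ X)), initSeg σ k ∈ powersetCard k univ :=
    fun σ _ => mem_powersetCard.2 ⟨subset_univ _, by rw [card_initSeg, min_eq_right hk]⟩
  rw [sum_congr rfl fun T hT =>
      card_initSeg_fiber_congr k ((mem_powersetCard.1 hT).2.trans hS.symm),
    sum_const, card_powersetCard, card_univ, hn, smul_eq_mul, filter_true_of_mem hall,
    card_univ, card_equiv_fin hn] at hsum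
  rw [mul_comm, hsum]

lemma card_initSeg_mem_mul_choose (hn : Fintype.card X = n) (W : Finset (Finset X)) {k : ℕ}
    (hk : k ≤ n) :
    #{σ : Fin n ≃ X | initSeg σ k ∈ W} * n.choose k = #{S ∈ W | #S = k} * n.factorial := by
  have hsum := sum_card_fiberwise_eq_card_filter univ {S ∈ W | #S = k}
    fun σ : Fin n ≃ X => initSeg σ k
  have hfilter : #{σ : Fin n ≃ X | initSeg σ k ∈ {S ∈ W | #S = k}}
      = #{σ : Fin n ≃ X | initSeg σ k ∈ W} :=
    congrArg card <| filter_congr fun σ _ => by simp [card_initSeg, hk]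
  rw [hfilter] at hsum
  rw [← hsum, sum_mul, sum_congr rfl fun S hS =>
    card_initSeg_fiber_mul_choose hn hk (mem_filter.1 hS).2, sum_const, smul_eq_mul]

lemma card_initSeg_notMem_div_factorial (hn : Fintype.card X = n) (W : Finset (Finset X))
    {k : ℕ} (hk : k ≤ n) :
    (#{σ : Fin n ≃ X | initSeg σ k ∉ W} : ℝ) / n.factorial
      = 1 - (#{S ∈ W | #S = k} : ℝ) / n.choose k := by
  have hsplit := card_filter_add_card_filter_not (s := (univ : Finset (Fin n ≃ X)))
    (fun σ => initSeg σ k ∈ W)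
  rw [card_univ, card_equiv_fin hn] at hsplit
  have hwin : (#{σ : Fin n ≃ X | initSeg σ k ∈ W} : ℝ) * n.choose k
      = #{S ∈ W | #S = k} *
        (#{σ : Fin n ≃ X | initSeg σ k ∈ W} + #{σ : Fin n ≃ X | initSeg σ k ∉ W}) := by
    exact_mod_cast hsplit ▸ card_initSeg_mem_mul_choose hn W hk
  have hchoose : (n.choose k : ℝ) ≠ 0 := by exact_mod_cast (Nat.choose_pos hk).ne'
  field_simp
  rw [← hsplit]
  push_cast
  linear_combination -hwin

end

theorem statement1_general {X : Type*} [Fintype X] [DecidableEq X] (n : ℕ)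
    (hn : Fintype.card X = n) (W : Finset (Finset X))
    (hmono : ∀ A B : Finset X, A ∈ W → A ⊆ B → B ∈ W) :
    (∑ σ : Fin n ≃ X, (Qval W σ : ℝ)) / (n.factorial : ℝ)
      = (n : ℝ) + 1 - ∑ k ∈ Finset.range (n + 1),
          ((W.filter fun S => S.card = k).card : ℝ) / (n.choose k : ℝ) := by
  calc (∑ σ : Fin n ≃ X, (Qval W σ : ℝ)) / n.factorial
      = ∑ k ∈ range (n + 1), (#{σ : Fin n ≃ X | initSeg σ k ∉ W} : ℝ) / n.factorial := by
        rw [← Nat.cast_sum, sum_Qval_eq_sum_card_losing W hmono, Nat.cast_sum, sum_div]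
    _ = ∑ k ∈ range (n + 1), (1 - (#{S ∈ W | #S = k} : ℝ) / n.choose k) :=
        sum_congr rfl fun k hk =>
          card_initSeg_notMem_div_factorial hn W (Nat.lt_succ_iff.1 (mem_range.1 hk))
    _ = _ := by rw [sum_sub_distrib, sum_const, card_range, nsmul_one, Nat.cast_succ]

/-- For a monotone simple game `(X, W)` with `|X| = n`, the average of
`Q_σ` over all `n!` bijections `σ` equals `n + 1 - ∑_{k=0}^{n} |W_k| / C(n,k)`. -/
theorem statement1 {X : Type*} [Fintype X] [DecidableEq X] (n : ℕ)
    (hn : Fintype.card X = n) (W : Finset (Finset X)) (hW : ∅ ∉ W)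
    (hmono : ∀ A B : Finset X, A ∈ W → A ⊆ B → B ∈ W) :
    (∑ σ : Fin n ≃ X, (Qval W σ : ℝ)) / (n.factorial : ℝ)
      = (n : ℝ) + 1 - ∑ k ∈ Finset.range (n + 1),
          ((W.filter fun S => S.card = k).card : ℝ) / (n.choose k : ℝ) :=
  statement1_general n hn W hmono
end

section
/- Let X be a finite set with |X| = n, let v : 2^X → ℝ be a TU-game (v(∅) = 0), and let F be an admissible rescaling satisfying the symmetry condition F(n,k) − F(n,k+1) = F(n,n−k) − F(n,n+1−k) for all 0 ≤ k ≤ n. Define Q*_F(v) = Σ_{S ⊆ X} f(n,|S|) v(S) where f(n,k) = (F(n,k) − F(n,k+1)) / C(n,k), and let v* be the dual game v*(S) = v(X) − v(X∖S). Then Q*_F(v) + Q*_F(v*) = v(X). -/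
/-- `F : ℕ × ℕ → ℝ` (curried) is an admissible rescaling: `F n k` is nonincreasing in `k`
for each fixed `n`, `F n 0 = 1`, and `F n k = 0` whenever `k > n`. -/
def Admissible (F : ℕ → ℕ → ℝ) : Prop :=
  (∀ n, Antitone (F n)) ∧ (∀ n, F n 0 = 1) ∧ (∀ n k, n < k → F n k = 0)

/-- The weight function `f(n,k) = (F(n,k) − F(n,k+1)) / C(n,k)` associated to `F`. -/
noncomputable def fwt (F : ℕ → ℕ → ℝ) (n k : ℕ) : ℝ :=
  (F n k - F n (k + 1)) / (n.choose k : ℝ)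

/-- The collective value `Q*_F(v) = ∑_{S ⊆ X} f(n,|S|) v(S)` of a TU-game `v` on an
`n`-element set `X`. -/
noncomputable def QstarTU {X : Type*} [Fintype X] [DecidableEq X] (F : ℕ → ℕ → ℝ)
    (n : ℕ) (v : Finset X → ℝ) : ℝ :=
  ∑ S : Finset X, fwt F n S.card * v S

/-- If `v` is a TU-game on `X` with `|X| = n` and `F` is an admissible
rescaling satisfying the symmetry condition
`F(n,k) − F(n,k+1) = F(n,n−k) − F(n,n+1−k)` for all `0 ≤ k ≤ n`, then
`Q*_F(v) + Q*_F(v*) = v(X)`, where `v*` is the dual game `v*(S) = v(X) − v(X∖S)`. -/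
theorem statement5 {X : Type*} [Fintype X] [DecidableEq X] (n : ℕ)
    (hn : Fintype.card X = n) (F : ℕ → ℕ → ℝ) (hF : Admissible F)
    (hsym : ∀ k ≤ n, F n k - F n (k + 1) = F n (n - k) - F n (n + 1 - k))
    (v : Finset X → ℝ) (hv : v ∅ = 0) :
    QstarTU F n v + QstarTU F n (fun S => v Finset.univ - v (Finset.univ \ S))
      = v Finset.univ := by
  classical
  have hsymm : ∀ k ≤ n, fwt F n (n - k) = fwt F n k := by
    intro k hk
    unfold fwt
    have h1 : n + 1 - k = n - k + 1 := by omega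
    rw [← h1, ← hsym k hk, Nat.choose_symm hk]
  have hcard : ∀ S : Finset X, S.card ≤ n := fun S => hn ▸ S.card_le_univ
  have hkey : ∀ S : Finset X, fwt F n (Finset.univ \ S).card = fwt F n S.card := by
    intro S
    rw [Finset.card_sdiff_of_subset (Finset.subset_univ S), Finset.card_univ, hn, hsymm _ (hcard S)]
  have hbij : ∑ S : Finset X, fwt F n S.card * v (Finset.univ \ S)
      = ∑ S : Finset X, fwt F n S.card * v S := by
    rw [Fintype.sum_bijective (fun S : Finset X => Finset.univ \ S)
      (Function.Involutive.bijective (fun S => by simp [Finset.sdiff_sdiff_self_left]))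
      _ (fun T => fwt F n T.card * v T) (fun S => by simp only [hkey])]
  have hsum1 : ∑ S : Finset X, fwt F n S.card = 1 := by
    have := Finset.sum_powerset_apply_card (fun k => fwt F n k) (x := (Finset.univ : Finset X))
    rw [Finset.powerset_univ] at this
    rw [this, Finset.card_univ, hn]
    have : ∀ k ∈ Finset.range (n + 1), (n.choose k) • fwt F n k = F n k - F n (k+1) := by
      intro k hk
      rw [nsmul_eq_mul]
      unfold fwt
      rw [mul_div_cancel₀]
      exact Nat.cast_ne_zero.2 (Nat.choose_pos (Nat.lt_succ_iff.1 (Finset.mem_range.1 hk))).ne'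
    rw [Finset.sum_congr rfl this, Finset.sum_range_sub' (fun k => F n k)]
    rw [hF.2.1, hF.2.2 n (n+1) (by omega)]
    ring
  unfold QstarTU
  simp only [mul_sub]
  rw [Finset.sum_sub_distrib, hbij, ← Finset.sum_mul, hsum1]
  ring
end

section
/- Let X be a finite set with |X| = n, let v : 2^X → ℝ be a TU-game (v(∅) = 0) that is self-dual, i.e., v(S) = v(X) − v(X∖S) for all S ⊆ X, and let F be an admissible rescaling satisfying F(n,k) − F(n,k+1) = F(n,n−k) − F(n,n+1−k) for all 0 ≤ k ≤ n. Then Q*_F(v) = v(X)/2, where Q*_F(v) = Σ_{S ⊆ X} f(n,|S|) v(S) and f(n,k) = (F(n,k) − F(n,k+1)) / C(n,k). -/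
/-!
Pair each coalition `S` with its complement. The symmetry of `F` gives `f(n,|Sᶜ|) = f(n,|S|)`
and self-duality gives `v S + v Sᶜ = v X`, so `2 Q*_F(v) = (∑_S f(n,|S|)) v X`; the total weight
telescopes to `F(n,0) − F(n,n+1) = 1`.
-/

open Finset

theorem sum_mul_eq_half_of_selfDual {X : Type*} [Fintype X] [DecidableEq X]
    (w v : Finset X → ℝ) (hw : ∀ S, w Sᶜ = w S)
    (hsd : ∀ S : Finset X, v S = v univ - v (univ \ S)) :
    ∑ S, w S * v S = (∑ S, w S) * v univ / 2 := by
  have hpair : ∀ S, w S * v S + w Sᶜ * v Sᶜ = w S * v univ := fun S => by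
    rw [hw, hsd S, compl_eq_univ_sdiff]; ring
  have hcompl : ∑ S, w Sᶜ * v Sᶜ = ∑ S, w S * v S :=
    compl_involutive.bijective.sum_comp fun S => w S * v S
  have htwice : 2 * ∑ S, w S * v S = (∑ S, w S) * v univ := by
    rw [two_mul]
    nth_rw 2 [← hcompl]
    rw [← sum_add_distrib, sum_mul]
    exact sum_congr rfl fun S _ => hpair S
  linarith

theorem fwt_sub_eq_of_symm (F : ℕ → ℕ → ℝ) {n k : ℕ}
    (hsym : ∀ k ≤ n, F n k - F n (k + 1) = F n (n - k) - F n (n + 1 - k)) (hk : k ≤ n) :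
    fwt F n (n - k) = fwt F n k := by
  rw [fwt, fwt, hsym k hk, Nat.choose_symm hk, Nat.sub_add_comm hk]

theorem sum_fwt_card_eq_sub {X : Type*} [Fintype X] (F : ℕ → ℕ → ℝ) :
    ∑ S : Finset X, fwt F (Fintype.card X) #S
      = F (Fintype.card X) 0 - F (Fintype.card X) (Fintype.card X + 1) := by
  set n := Fintype.card X
  have hterm : ∀ k ∈ range (n + 1), n.choose k • fwt F n k = F n k - F n (k + 1) :=
    fun k hk => by
      have hchoose : (n.choose k : ℝ) ≠ 0 :=
        Nat.cast_ne_zero.2 (Nat.choose_pos (Nat.lt_succ_iff.1 (mem_range.1 hk))).ne'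
      rw [nsmul_eq_mul, fwt, mul_div_cancel₀ _ hchoose]
  rw [← powerset_univ, sum_powerset_apply_card, card_univ, sum_congr rfl hterm,
    sum_range_sub']

theorem Admissible.sum_fwt_card {F : ℕ → ℕ → ℝ} (hF : Admissible F) (X : Type*) [Fintype X] :
    ∑ S : Finset X, fwt F (Fintype.card X) #S = 1 := by
  rw [sum_fwt_card_eq_sub, hF.2.1, hF.2.2 _ _ (Nat.lt_succ_self _), sub_zero]

theorem statement6_general {X : Type*} [Fintype X] [DecidableEq X] (n : ℕ)
    (hn : Fintype.card X = n) (F : ℕ → ℕ → ℝ) (hF : Admissible F)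
    (hsym : ∀ k ≤ n, F n k - F n (k + 1) = F n (n - k) - F n (n + 1 - k))
    (v : Finset X → ℝ)
    (hsd : ∀ S : Finset X, v S = v Finset.univ - v (Finset.univ \ S)) :
    QstarTU F n v = v Finset.univ / 2 := by
  subst hn
  have hw : ∀ S : Finset X, fwt F (Fintype.card X) #Sᶜ = fwt F (Fintype.card X) #S :=
    fun S => by rw [card_compl, fwt_sub_eq_of_symm F hsym (card_le_univ S)]
  rw [QstarTU, sum_mul_eq_half_of_selfDual _ v hw hsd, hF.sum_fwt_card, one_mul]

/-- If `v` is a self-dual TU-game on `X` with `|X| = n` (i.e.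
`v(S) = v(X) − v(X∖S)` for all `S`) and `F` is an admissible rescaling satisfying
`F(n,k) − F(n,k+1) = F(n,n−k) − F(n,n+1−k)` for all `0 ≤ k ≤ n`, then
`Q*_F(v) = v(X)/2`. -/
theorem statement6 {X : Type*} [Fintype X] [DecidableEq X] (n : ℕ)
    (hn : Fintype.card X = n) (F : ℕ → ℕ → ℝ) (hF : Admissible F)
    (hsym : ∀ k ≤ n, F n k - F n (k + 1) = F n (n - k) - F n (n + 1 - k))
    (v : Finset X → ℝ) (hv : v ∅ = 0)
    (hsd : ∀ S : Finset X, v S = v Finset.univ - v (Finset.univ \ S)) :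
    QstarTU F n v = v Finset.univ / 2 :=
  statement6_general n hn F hF hsym v hsd
end

section
/- Let G = (X, W) be a simple game on a finite set X with |X| = n that is both proper and strong, and let F be an admissible rescaling satisfying F(n,k) − F(n,k+1) = F(n,n−k) − F(n,n+1−k) for all 0 ≤ k ≤ n. Then Q*_F(G) = 1/2, where Q*_F(G) = Σ_{k=0}^{n} f(n,k) |W_k| and f(n,k) = (F(n,k) − F(n,k+1)) / C(n,k). -/
/-! Complementation maps the losing coalitions of size `k` bijectively onto the winning
coalitions of size `n - k`, so `|W_k| + |W_{n-k}| = C(n,k)`. The symmetry of `F` makes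
`f(n,k) = f(n,n-k)`, so reflecting the sum `k ↦ n - k` and averaging gives
`Q* = ½ ∑ f(n,k) C(n,k) = ½ (F(n,0) - F(n,n+1)) = ½`. -/

open Finset

/-- The decisiveness index `Q*_F(G) = ∑_{k=0}^{n} f(n,k) |W_k|` of a simple game with
winning coalitions `W` on an `n`-element set. -/
noncomputable def QstarF {X : Type*} [DecidableEq X] (F : ℕ → ℕ → ℝ) (n : ℕ)
    (W : Finset (Finset X)) : ℝ :=
  ∑ k ∈ Finset.range (n + 1), fwt F n k * ((W.filter fun S => S.card = k).card : ℝ)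

open Finset

section ProperStrong

variable {X : Type*} [Fintype X] [DecidableEq X] {W : Finset (Finset X)}

theorem card_filter_notMem_powersetCard_eq (hproper : ∀ S ∈ W, univ \ S ∉ W)
    (hstrong : ∀ S : Finset X, S ∉ W → univ \ S ∈ W) {k : ℕ} (hk : k ≤ Fintype.card X) :
    #{S ∈ powersetCard k (univ : Finset X) | S ∉ W}
      = #{S ∈ powersetCard (Fintype.card X - k) (univ : Finset X) | S ∈ W} := by
  have card_compl {S : Finset X} : #(univ \ S) = Fintype.card X - #S := by
    rw [card_univ_sdiff]
  refine card_nbij' (univ \ ·) (univ \ ·) ?_ ?_ ?_ ?_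
  · intro S hS
    simp only [coe_filter, mem_powersetCard, Set.mem_ofPred_eq] at hS ⊢
    exact ⟨⟨subset_univ _, by rw [card_compl, hS.1.2]⟩, hstrong S hS.2⟩
  · intro T hT
    simp only [coe_filter, mem_powersetCard, Set.mem_ofPred_eq] at hT ⊢
    exact ⟨⟨subset_univ _, by rw [card_compl, hT.1.2]; omega⟩, hproper T hT.2⟩
  · intro S _
    simp
  · intro T _
    simp

theorem card_filter_card_add_card_filter_card_sub (hproper : ∀ S ∈ W, univ \ S ∉ W)
    (hstrong : ∀ S : Finset X, S ∉ W → univ \ S ∈ W) {k : ℕ} (hk : k ≤ Fintype.card X) :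
    #{S ∈ W | #S = k} + #{S ∈ W | #S = Fintype.card X - k} = (Fintype.card X).choose k := by
  have in_layer (m : ℕ) : #{S ∈ W | #S = m} = #{S ∈ powersetCard m (univ : Finset X) | S ∈ W} := by
    congr 1
    ext S
    simp [mem_powersetCard, and_comm]
  rw [in_layer, in_layer, ← card_filter_notMem_powersetCard_eq hproper hstrong hk,
    card_filter_add_card_filter_not, card_powersetCard, card_univ]

end ProperStrong

theorem sum_range_mul_eq_half_of_reflect {n : ℕ} {w a c : ℕ → ℝ}
    (hw : ∀ k ≤ n, w (n - k) = w k) (ha : ∀ k ≤ n, a k + a (n - k) = c k) :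
    ∑ k ∈ range (n + 1), w k * a k = (∑ k ∈ range (n + 1), w k * c k) / 2 := by
  have reflect : ∑ k ∈ range (n + 1), w k * a k = ∑ k ∈ range (n + 1), w k * a (n - k) := by
    rw [← sum_range_reflect]
    refine sum_congr rfl fun k hk => ?_
    have hk : k ≤ n := Nat.lt_succ_iff.mp (mem_range.mp hk)
    rw [Nat.add_sub_cancel, hw k hk]
  have double : 2 * ∑ k ∈ range (n + 1), w k * a k = ∑ k ∈ range (n + 1), w k * c k := by
    rw [two_mul]
    nth_rewrite 2 [reflect]
    rw [← sum_add_distrib]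
    refine sum_congr rfl fun k hk => ?_
    rw [← mul_add, ha k (Nat.lt_succ_iff.mp (mem_range.mp hk))]
  linarith

theorem fwt_sub_eq (F : ℕ → ℕ → ℝ) {n k : ℕ} (hk : k ≤ n)
    (hsym : F n k - F n (k + 1) = F n (n - k) - F n (n + 1 - k)) :
    fwt F n (n - k) = fwt F n k := by
  rw [fwt, fwt, Nat.choose_symm hk, hsym, Nat.sub_add_comm hk]

theorem sum_fwt_mul_choose (F : ℕ → ℕ → ℝ) (n : ℕ) :
    ∑ k ∈ range (n + 1), fwt F n k * n.choose k = F n 0 - F n (n + 1) := by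
  rw [← sum_range_sub']
  refine sum_congr rfl fun k hk => ?_
  have hchoose : (n.choose k : ℝ) ≠ 0 :=
    Nat.cast_ne_zero.mpr (Nat.choose_pos (Nat.lt_succ_iff.mp (mem_range.mp hk))).ne'
  exact div_mul_cancel₀ _ hchoose

theorem statement7_general {X : Type*} [Fintype X] [DecidableEq X] (n : ℕ)
    (hn : Fintype.card X = n) (W : Finset (Finset X))
    (hproper : ∀ S ∈ W, Finset.univ \ S ∉ W)
    (hstrong : ∀ S : Finset X, S ∉ W → Finset.univ \ S ∈ W)
    (F : ℕ → ℕ → ℝ) (hF : Admissible F)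
    (hsym : ∀ k ≤ n, F n k - F n (k + 1) = F n (n - k) - F n (n + 1 - k)) :
    QstarF F n W = 1 / 2 := by
  subst hn
  have hpair (k : ℕ) (hk : k ≤ Fintype.card X) :
      (#{S ∈ W | #S = k} : ℝ) + #{S ∈ W | #S = Fintype.card X - k}
        = (Fintype.card X).choose k := by
    exact_mod_cast card_filter_card_add_card_filter_card_sub hproper hstrong hk
  rw [QstarF, sum_range_mul_eq_half_of_reflect (fun k hk => fwt_sub_eq F hk (hsym k hk)) hpair,
    sum_fwt_mul_choose, hF.2.1, hF.2.2 _ _ (Nat.lt_succ_self _)]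
  norm_num

/-- If the simple game `(X, W)` with `|X| = n` is both proper and strong,
and `F` is an admissible rescaling satisfying
`F(n,k) − F(n,k+1) = F(n,n−k) − F(n,n+1−k)` for all `0 ≤ k ≤ n`, then `Q*_F(G) = 1/2`. -/
theorem statement7 {X : Type*} [Fintype X] [DecidableEq X] (n : ℕ)
    (hn : Fintype.card X = n) (W : Finset (Finset X)) (hW : ∅ ∉ W)
    (hproper : ∀ S ∈ W, Finset.univ \ S ∉ W)
    (hstrong : ∀ S : Finset X, S ∉ W → Finset.univ \ S ∈ W)
    (F : ℕ → ℕ → ℝ) (hF : Admissible F)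
    (hsym : ∀ k ≤ n, F n k - F n (k + 1) = F n (n - k) - F n (n + 1 - k)) :
    QstarF F n W = 1 / 2 :=
  statement7_general n hn W hproper hstrong F hF hsym
end

section
/- Let n ≥ 1 and let f : {0,1,…,n} → ℝ satisfy f(k) ≥ 0 for all k, Σ_{k=0}^{n} C(n,k) f(k) = 1, and Σ_{k=1}^{n} C(n−1,k−1) f(k) = 1. Then f(n) = 1 and f(k) = 0 for all 0 ≤ k ≤ n−1. -/
/-!
By Pascal's rule `C(n,k) = C(n-1,k-1) + C(n-1,k)`, the first normalization equals the second plus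
`∑_{k<n} C(n-1,k) f(k)`. That sum of nonnegative terms with positive coefficients is therefore `0`,
so `f` vanishes below `n`, and the second normalization reduces to `f(n) = 1`.
-/

open Finset

theorem sum_range_succ_choose_mul {R : Type*} [Semiring R] (m : ℕ) (f : ℕ → R) :
    ∑ k ∈ range (m + 2), ((m + 1).choose k : R) * f k =
      ∑ k ∈ range (m + 1), (m.choose k : R) * f k +
        ∑ k ∈ range (m + 1), (m.choose k : R) * f (k + 1) := by
  have hextend : ∑ k ∈ range (m + 1), (m.choose k : R) * f k =
      ∑ k ∈ range (m + 2), (m.choose k : R) * f k := by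
    simp [sum_range_succ _ (m + 1)]
  rw [hextend, sum_range_succ' _ (m + 1), sum_range_succ' _ (m + 1)]
  simp only [Nat.choose_succ_succ, Nat.cast_add, add_mul, sum_add_distrib, Nat.choose_zero_right]
  abel

theorem sum_Icc_choose_pred_mul {R : Type*} [Semiring R] (m : ℕ) (f : ℕ → R) :
    ∑ k ∈ Icc 1 (m + 1), (m.choose (k - 1) : R) * f k =
      ∑ k ∈ range (m + 1), (m.choose k : R) * f (k + 1) := by
  rw [← Ico_add_one_right_eq_Icc, sum_Ico_eq_sum_range]
  simp [add_comm 1]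

theorem eq_zero_of_sum_range_choose_mul_eq_zero {R : Type*} [Semiring R] [PartialOrder R]
    [IsStrictOrderedRing R] {n : ℕ} {f : ℕ → R} (hf : ∀ k ≤ n, 0 ≤ f k)
    (h : ∑ k ∈ range (n + 1), (n.choose k : R) * f k = 0) {k : ℕ} (hk : k ≤ n) : f k = 0 := by
  have hterm : (n.choose k : R) * f k = 0 :=
    (sum_eq_zero_iff_of_nonneg fun i hi =>
      mul_nonneg (Nat.cast_nonneg _) (hf i (Nat.lt_succ_iff.mp (mem_range.mp hi)))).mp h k
      (mem_range.mpr (Nat.lt_succ_of_le hk))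
  by_contra hne
  exact (mul_pos (Nat.cast_pos.mpr (Nat.choose_pos hk)) ((hf k hk).lt_of_ne' hne)).ne' hterm

theorem statement10_general (n : ℕ) (f : ℕ → ℝ) (hpos : ∀ k ≤ n, 0 ≤ f k)
    (h1 : ∑ k ∈ Finset.range (n + 1), (n.choose k : ℝ) * f k = 1)
    (h2 : ∑ k ∈ Finset.Icc 1 n, ((n - 1).choose (k - 1) : ℝ) * f k = 1) :
    f n = 1 ∧ ∀ k < n, f k = 0 := by
  cases n with
  | zero => simp at h2
  | succ m =>
    rw [Nat.add_sub_cancel, sum_Icc_choose_pred_mul] at h2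
    have hlower : ∀ k < m + 1, f k = 0 := fun k hk =>
      eq_zero_of_sum_range_choose_mul_eq_zero (fun i hi => hpos i (by omega))
        (by linarith [sum_range_succ_choose_mul m f]) (Nat.lt_succ_iff.mp hk)
    refine ⟨?_, hlower⟩
    rw [sum_range_succ, sum_eq_zero fun k hk => by rw [hlower k (mem_range.mp hk), mul_zero]] at h1
    simpa using h1

/-- If `n ≥ 1` and `f : {0,…,n} → ℝ` satisfies `f(k) ≥ 0` for all `k`,
`∑_{k=0}^{n} C(n,k) f(k) = 1` and `∑_{k=1}^{n} C(n−1,k−1) f(k) = 1`, then `f(n) = 1`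
and `f(k) = 0` for all `0 ≤ k ≤ n−1`. -/
theorem statement10 (n : ℕ) (hn : 1 ≤ n) (f : ℕ → ℝ) (hpos : ∀ k ≤ n, 0 ≤ f k)
    (h1 : ∑ k ∈ Finset.range (n + 1), (n.choose k : ℝ) * f k = 1)
    (h2 : ∑ k ∈ Finset.Icc 1 n, ((n - 1).choose (k - 1) : ℝ) * f k = 1) :
    f n = 1 ∧ ∀ k < n, f k = 0 :=
  statement10_general n f hpos h1 h2
end

section
/- Let F : ℕ × ℕ → ℝ with F(n,k) = 0 for k > n, and set f(n,k) = (F(n,k) − F(n,k+1)) / C(n,k) for 0 ≤ k ≤ n. Then for each n, the recursion f(n,k) = f(n+1,k) + f(n+1,k+1) holds for all 0 ≤ k ≤ n if and only if F(n,k) − F(n,k+1) = ((n+1−k)/(n+1)) F(n+1,k) + ((2k−n)/(n+1)) F(n+1,k+1) − ((k+1)/(n+1)) F(n+1,k+2) holds for all 0 ≤ k ≤ n. -/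
private lemma key (F : ℕ → ℕ → ℝ) (n k : ℕ) (hk : k ≤ n) :
    (fwt F n k = fwt F (n + 1) k + fwt F (n + 1) (k + 1))
    ↔ (F n k - F n (k + 1) =
        (((n : ℝ) + 1 - (k : ℝ)) / ((n : ℝ) + 1)) * F (n + 1) k
        + ((2 * (k : ℝ) - (n : ℝ)) / ((n : ℝ) + 1)) * F (n + 1) (k + 1)
        - (((k : ℝ) + 1) / ((n : ℝ) + 1)) * F (n + 1) (k + 2)) := by
  have ha : (n.choose k : ℝ) ≠ 0 :=
    Nat.cast_ne_zero.mpr (Nat.choose_pos hk).ne'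
  have hb : ((n+1).choose k : ℝ) ≠ 0 :=
    Nat.cast_ne_zero.mpr (Nat.choose_pos (hk.trans (Nat.le_succ n))).ne'
  have hc : ((n+1).choose (k+1) : ℝ) ≠ 0 :=
    Nat.cast_ne_zero.mpr (Nat.choose_pos (Nat.succ_le_succ hk)).ne'
  have hn : ((n : ℝ) + 1) ≠ 0 := by positivity
  have h1 : (n.choose k : ℝ) * ((n:ℝ) + 1) = ((n+1).choose k : ℝ) * ((n:ℝ) + 1 - (k:ℝ)) := by
    have := Nat.choose_mul_succ_eq n k
    have hsub : ((n + 1 - k : ℕ) : ℝ) = (n:ℝ) + 1 - (k:ℝ) := by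
      push_cast [Nat.cast_sub (hk.trans (Nat.le_succ n))]; ring
    calc (n.choose k : ℝ) * ((n:ℝ)+1) = ((n.choose k * (n+1) : ℕ) : ℝ) := by push_cast; ring
      _ = (((n+1).choose k * (n+1-k) : ℕ) : ℝ) := by rw [this]
      _ = ((n+1).choose k : ℝ) * ((n:ℝ)+1-(k:ℝ)) := by push_cast [hsub]; ring
  have h2 : ((n+1).choose (k+1) : ℝ) * ((k:ℝ) + 1) = (n.choose k : ℝ) * ((n:ℝ) + 1) := by
    have := Nat.add_one_mul_choose_eq n k
    calc ((n+1).choose (k+1) : ℝ) * ((k:ℝ)+1) = (((n+1).choose (k+1) * (k+1) : ℕ) : ℝ) := by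
          push_cast; ring
      _ = ((Nat.succ n * n.choose k : ℕ) : ℝ) := by rw [← this]
      _ = (n.choose k : ℝ) * ((n:ℝ)+1) := by push_cast; ring
  unfold fwt
  rw [div_add_div _ _ hb hc, div_eq_div_iff ha (mul_ne_zero hb hc)]
  simp only [show k + 1 + 1 = k + 2 from rfl]
  constructor
  · intro h
    field_simp
    apply mul_right_cancel₀ (mul_ne_zero hb hc)
    linear_combination ((n:ℝ)+1) * h
      + (F (n+1) k - F (n+1) (k+1)) * ((n+1).choose (k+1) : ℝ) * h1
      - (F (n+1) (k+1) - F (n+1) (k+2)) * ((n+1).choose k : ℝ) * h2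
  · intro h
    field_simp at h
    apply mul_right_cancel₀ hn
    linear_combination ((n+1).choose k : ℝ) * ((n+1).choose (k+1) : ℝ) * h
      - (F (n+1) k - F (n+1) (k+1)) * ((n+1).choose (k+1) : ℝ) * h1
      + (F (n+1) (k+1) - F (n+1) (k+2)) * ((n+1).choose k : ℝ) * h2

/-- Let `F : ℕ × ℕ → ℝ` with `F(n,k) = 0` for `k > n`. For each `n`, the
coherence recursion `f(n,k) = f(n+1,k) + f(n+1,k+1)` holds for all `0 ≤ k ≤ n` if and
only if `F(n,k) − F(n,k+1) = ((n+1−k)/(n+1)) F(n+1,k) + ((2k−n)/(n+1)) F(n+1,k+1)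
− ((k+1)/(n+1)) F(n+1,k+2)` holds for all `0 ≤ k ≤ n`. -/
theorem statement12 (F : ℕ → ℕ → ℝ) (hF0 : ∀ n k, n < k → F n k = 0) (n : ℕ) :
    (∀ k ≤ n, fwt F n k = fwt F (n + 1) k + fwt F (n + 1) (k + 1))
    ↔ (∀ k ≤ n, F n k - F n (k + 1) =
        (((n : ℝ) + 1 - (k : ℝ)) / ((n : ℝ) + 1)) * F (n + 1) k
        + ((2 * (k : ℝ) - (n : ℝ)) / ((n : ℝ) + 1)) * F (n + 1) (k + 1)
        - (((k : ℝ) + 1) / ((n : ℝ) + 1)) * F (n + 1) (k + 2)) := by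
  constructor
  · exact fun h k hk => (key F n k hk).mp (h k hk)
  · exact fun h k hk => (key F n k hk).mpr (h k hk)
end

section
/- Let X be a finite set with |X| = n ≥ 1. Suppose f, f′ : {1,…,n} → ℝ are such that for every TU-game v : 2^X → ℝ with v(∅) = 0 and every i ∈ X, Σ_{S ⊆ X, i ∈ S} f(|S|)(v(S) − v(S∖{i})) = Σ_{S ⊆ X, i ∈ S} f′(|S|)(v(S) − v(S∖{i})). Then f(k) = f′(k) for all 1 ≤ k ≤ n. In other words, the map sending a weight function on coalition sizes to the associated weighted semivalue is injective. -/
open Finset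

section

variable {X : Type*} [DecidableEq X]

def diracGame (T : Finset X) : Finset X → ℝ := Pi.single T 1

@[simp] theorem diracGame_self (T : Finset X) : diracGame T T = 1 := Pi.single_eq_same T 1

theorem diracGame_of_ne {S T : Finset X} (h : S ≠ T) : diracGame T S = 0 :=
  Pi.single_eq_of_ne h 1

theorem sum_mul_marginal_diracGame [Fintype X] (g : ℕ → ℝ) {T : Finset X} {i : X} (hi : i ∈ T) :
    ∑ S ∈ univ.filter (fun S : Finset X => i ∈ S),
        g S.card * (diracGame T S - diracGame T (S.erase i)) = g T.card := by
  -- `S.erase i ≠ T` for every `S`, since `i ∈ T`; so only the term `S = T` survives.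
  have herase (S : Finset X) : S.erase i ≠ T := fun hST => notMem_erase i S (hST ▸ hi)
  rw [sum_eq_single T]
  · simp [diracGame_of_ne (herase T)]
  · intro S _ hST
    simp [diracGame_of_ne hST, diracGame_of_ne (herase S)]
  · simp [hi]

end

theorem statement17_general {X : Type*} [Fintype X] [DecidableEq X] (n : ℕ)
    (hn : Fintype.card X = n) (f f' : ℕ → ℝ)
    (h : ∀ v : Finset X → ℝ, v ∅ = 0 → ∀ i : X,
      ∑ S ∈ Finset.univ.filter (fun S : Finset X => i ∈ S),
          f S.card * (v S - v (S.erase i))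
        = ∑ S ∈ Finset.univ.filter (fun S : Finset X => i ∈ S),
            f' S.card * (v S - v (S.erase i))) :
    ∀ k, 1 ≤ k → k ≤ n → f k = f' k := by
  intro k hk1 hkn
  obtain ⟨i⟩ : Nonempty X := Fintype.card_pos_iff.mp (by omega)
  obtain ⟨T, hiT, -, rfl⟩ := exists_subsuperset_card_eq (subset_univ {i})
    (by simpa using hk1) (by simpa [hn] using hkn)
  have hi : i ∈ T := hiT (mem_singleton_self i)
  have hT : (∅ : Finset X) ≠ T := fun h => notMem_empty i (h ▸ hi)
  simpa only [sum_mul_marginal_diracGame _ hi] using h (diracGame T) (diracGame_of_ne hT) i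

/-- Let `X` be a finite set with `|X| = n ≥ 1`. If two weight functions
`f, f' : {1,…,n} → ℝ` induce the same weighted semivalue, i.e. for every TU-game `v` on
`X` (with `v(∅) = 0`) and every player `i`,
`∑_{S ∋ i} f(|S|)(v(S) − v(S∖{i})) = ∑_{S ∋ i} f'(|S|)(v(S) − v(S∖{i}))`,
then `f(k) = f'(k)` for all `1 ≤ k ≤ n`. -/
theorem statement17 {X : Type*} [Fintype X] [DecidableEq X] (n : ℕ)
    (hn : Fintype.card X = n) (hn1 : 1 ≤ n) (f f' : ℕ → ℝ)
    (h : ∀ v : Finset X → ℝ, v ∅ = 0 → ∀ i : X,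
      ∑ S ∈ Finset.univ.filter (fun S : Finset X => i ∈ S),
          f S.card * (v S - v (S.erase i))
        = ∑ S ∈ Finset.univ.filter (fun S : Finset X => i ∈ S),
            f' S.card * (v S - v (S.erase i))) :
    ∀ k, 1 ≤ k → k ≤ n → f k = f' k :=
  statement17_general n hn f f' h
end
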